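/- arXiv:1412.4662 — 4 statements merged into one kernel-verified Lean document; each statement's English description precedes it below -/
import Mathlib

section
/- A reaction network is not endotactic if and only if there exists a nonzero vector w ∈ ℝ^m and a partition of the reaction set R into disjoint sets R₀, R₋, R₊ such that: (E1) w·(y'(i) − y(i)) = 0 for all i ∈ R₀; (E2) w·(y'(i) − y(i)) < 0 for all i ∈ R₋; (E3) w·(y(i) − y(j)) ≤ 0 for all i ∈ R₋ and j ∈ R₊; and (E4) R₋ is nonempty. -/
/-!
If the network is not endotactic, some `w` and some reaction `i` witness it: `i` decreases `w`
and no reaction whose source lies strictly below `y i` in direction `w` increases `w`. Cutting the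
reactions with negative `w`-drift at the level `w · y i` gives the partition: `R₋` collects those
at or below the level, `R₀` the reactions with zero drift, and `R₊` everything else, whose sources
all lie at or above the level. Conversely any reaction of `R₋` is such a witness, since only
reactions of `R₊` can increase `w` and their sources lie at or above it.
-/

/-- Dot product on `Fin m → ℝ`. -/
def dot {m : ℕ} (w v : Fin m → ℝ) : ℝ := ∑ k, w k * v k

/-- A reaction network (reactions indexed by `ι`, sources `y`, targets `y'`) is endotactic. -/
def Endotactic {m : ℕ} {ι : Type*} [Fintype ι] (y y' : ι → Fin m → ℝ) : Prop :=
  ∀ w : Fin m → ℝ, ∀ i : ι, dot w (y' i - y i) < 0 →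
    ∃ j : ι, dot w (y j - y i) < 0 ∧ 0 < dot w (y' j - y j)

lemma dot_sub {m : ℕ} (w a b : Fin m → ℝ) : dot w (a - b) = dot w a - dot w b := by
  simp [dot, mul_sub, Finset.sum_sub_distrib]

lemma dot_zero_left {m : ℕ} (v : Fin m → ℝ) : dot 0 v = 0 := by
  simp [dot]

lemma ne_zero_of_dot_ne_zero {m : ℕ} {w v : Fin m → ℝ} (h : dot w v ≠ 0) : w ≠ 0 := by
  rintro rfl
  exact h (dot_zero_left v)

lemma not_endotactic_iff_exists_descent {m : ℕ} {ι : Type*} [Fintype ι] (y y' : ι → Fin m → ℝ) :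
    ¬ Endotactic y y' ↔ ∃ w : Fin m → ℝ, ∃ i, dot w (y' i - y i) < 0 ∧
      ∀ j, dot w (y j) < dot w (y i) → dot w (y' j - y j) ≤ 0 := by
  have hlower (w : Fin m → ℝ) (i j : ι) :
      dot w (y j - y i) < 0 ↔ dot w (y j) < dot w (y i) := by
    rw [dot_sub, sub_neg]
  simp only [Endotactic, hlower, not_forall, not_exists, not_and, not_lt, exists_prop]

section Partition

open Finset

variable {ι : Type*} [Fintype ι] [DecidableEq ι]

/-- `d` is the drift of a reaction and `h` the height of its source. -/
theorem exists_descent_iff_exists_partition (d h : ι → ℝ) :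
    (∃ i, d i < 0 ∧ ∀ j, h j < h i → d j ≤ 0) ↔
      ∃ R0 Rm Rp : Finset ι,
        Disjoint R0 Rm ∧ Disjoint R0 Rp ∧ Disjoint Rm Rp ∧
        R0 ∪ Rm ∪ Rp = univ ∧
        (∀ i ∈ R0, d i = 0) ∧
        (∀ i ∈ Rm, d i < 0) ∧
        (∀ i ∈ Rm, ∀ j ∈ Rp, h i ≤ h j) ∧
        Rm.Nonempty := by
  constructor
  · rintro ⟨i₀, hi₀, hbelow⟩
    set R0 := univ.filter fun i => d i = 0
    set Rm := univ.filter fun i => d i < 0 ∧ h i ≤ h i₀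
    have hR0m : Disjoint R0 Rm := disjoint_filter.2 fun i _ hi hm => hm.1.ne hi
    refine ⟨R0, Rm, (R0 ∪ Rm)ᶜ, hR0m, disjoint_compl_right_iff.2 subset_union_left,
      disjoint_compl_right_iff.2 subset_union_right, union_compl _,
      fun i hi => (mem_filter.1 hi).2, fun i hi => (mem_filter.1 hi).2.1, ?_,
      ⟨i₀, mem_filter.2 ⟨mem_univ _, hi₀, le_rfl⟩⟩⟩
    intro i hi j hj
    have hi := (mem_filter.1 hi).2.2
    simp only [mem_compl, mem_union, R0, Rm, mem_filter, mem_univ, true_and, not_or,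
      not_and, not_le] at hj
    rcases lt_or_gt_of_ne hj.1 with hneg | hpos
    · exact hi.trans (hj.2 hneg).le
    · exact hi.trans (not_lt.1 fun hlow => (hbelow j hlow).not_gt hpos)
  · rintro ⟨R0, Rm, Rp, -, -, -, hcover, hzero, hneg, hRmp, i, hi⟩
    refine ⟨i, hneg i hi, fun j hlow => ?_⟩
    have hj : j ∈ R0 ∪ Rm ∪ Rp := hcover ▸ mem_univ j
    rcases mem_union.1 hj with hj | hj
    · rcases mem_union.1 hj with hj | hj
      · exact (hzero j hj).le
      · exact (hneg j hj).le
    · exact absurd (hRmp i hi j hj) (not_le.2 hlow)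

end Partition

/-- A network is not endotactic iff there is a nonzero `w` and a partition
`R₀, R₋, R₊` of the reactions satisfying E1–E4. -/
theorem not_endotactic_iff {m : ℕ} {ι : Type*} [Fintype ι] [DecidableEq ι] (y y' : ι → Fin m → ℝ) :
    ¬ Endotactic y y' ↔
      ∃ w : Fin m → ℝ, w ≠ 0 ∧
        ∃ R0 Rm Rp : Finset ι,
          Disjoint R0 Rm ∧ Disjoint R0 Rp ∧ Disjoint Rm Rp ∧
          R0 ∪ Rm ∪ Rp = Finset.univ ∧
          (∀ i ∈ R0, dot w (y' i - y i) = 0) ∧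
          (∀ i ∈ Rm, dot w (y' i - y i) < 0) ∧
          (∀ i ∈ Rm, ∀ j ∈ Rp, dot w (y i - y j) ≤ 0) ∧
          Rm.Nonempty := by
  have hlevel (w : Fin m → ℝ) (i j : ι) : dot w (y i - y j) ≤ 0 ↔ dot w (y i) ≤ dot w (y j) := by
    rw [dot_sub, sub_nonpos]
  simp only [hlevel]
  rw [not_endotactic_iff_exists_descent]
  constructor
  · rintro ⟨w, i, hi, hbelow⟩
    exact ⟨w, ne_zero_of_dot_ne_zero hi.ne,
      (exists_descent_iff_exists_partition _ _).1 ⟨i, hi, hbelow⟩⟩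
  · rintro ⟨w, -, hpartition⟩
    exact ⟨w, (exists_descent_iff_exists_partition _ _).2 hpartition⟩
end

section
/- A single-species reaction network (reactions between real-number complexes) is endotactic if and only if both of the following hold: (+) for every reaction a → a' with a < a' there is a reaction b → b' with b > b' and b > a; and (−) for every reaction a → a' with a > a' there is a reaction b → b' with b < b' and b < a. -/
/-- A single-species network (sources `y`, targets `y'` in `ℝ`) is endotactic
in the sense of the general definition specialized to one species. -/
def Endotactic1 {ι : Type*} [Fintype ι] (y y' : ι → ℝ) : Prop :=
  ∀ w : ℝ, ∀ i : ι, w * (y' i - y i) < 0 →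
    ∃ j : ι, w * (y j - y i) < 0 ∧ 0 < w * (y' j - y j)

/-! In one dimension the endotactic condition for `w` depends only on the sign of `w`:
`w = -1` is condition (+) and `w = 1` is condition (−). -/

namespace Endotactic1

variable {ι : Type*} [Fintype ι] {y y' : ι → ℝ}

theorem plus (h : Endotactic1 y y') {i : ι} (hi : y i < y' i) :
    ∃ j : ι, y' j < y j ∧ y i < y j := by
  obtain ⟨j, hji, hj⟩ := h (-1) i (by linarith)
  exact ⟨j, by linarith, by linarith⟩

theorem minus (h : Endotactic1 y y') {i : ι} (hi : y' i < y i) :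
    ∃ j : ι, y j < y' j ∧ y j < y i := by
  obtain ⟨j, hji, hj⟩ := h 1 i (by linarith)
  exact ⟨j, by linarith, by linarith⟩

theorem of_plus_minus
    (hplus : ∀ i : ι, y i < y' i → ∃ j : ι, y' j < y j ∧ y i < y j)
    (hminus : ∀ i : ι, y' i < y i → ∃ j : ι, y j < y' j ∧ y j < y i) :
    Endotactic1 y y' := by
  intro w i hi
  rcases lt_trichotomy w 0 with hw | rfl | hw
  · obtain ⟨j, hj, hji⟩ := hplus i (sub_pos.mp (pos_of_mul_neg_right hi hw.le))
    exact ⟨j, mul_neg_of_neg_of_pos hw (sub_pos.mpr hji),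
      mul_pos_of_neg_of_neg hw (sub_neg.mpr hj)⟩
  · simp at hi
  · obtain ⟨j, hj, hji⟩ := hminus i (sub_neg.mp (neg_of_mul_neg_right hi hw.le))
    exact ⟨j, mul_neg_of_pos_of_neg hw (sub_neg.mpr hji), mul_pos hw (sub_pos.mpr hj)⟩

end Endotactic1

/-- A single-species network is endotactic iff conditions (+) and (−) hold. -/
theorem endotactic1_iff_plus_minus {ι : Type*} [Fintype ι] (y y' : ι → ℝ) :
    Endotactic1 y y' ↔
      ((∀ i : ι, y i < y' i → ∃ j : ι, y' j < y j ∧ y i < y j) ∧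
       (∀ i : ι, y' i < y i → ∃ j : ι, y j < y' j ∧ y j < y i)) :=
  ⟨fun h => ⟨fun _ => h.plus, fun _ => h.minus⟩,
    fun ⟨hplus, hminus⟩ => .of_plus_minus hplus hminus⟩
end

section
/- For the n-site processive phosphorylation/dephosphorylation network, the vector w assigning weight 1 to each complex ES₀,…,ES_{n−1}, FS₁,…,FS_n, to S_n, and to E, and weight 0 to S₀ and F, satisfies w·y = 1 for every source complex y of the network, while the reaction FS₁ → F + S₀ satisfies w·(y' − y) = −1 < 0. Consequently the network is not endotactic. -/
/-- Endotacticity for a network given as a set of (source, target) pairs. -/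
def EndotacticSet {m : ℕ} (R : Set ((Fin m → ℝ) × (Fin m → ℝ))) : Prop :=
  ∀ w : Fin m → ℝ, ∀ r ∈ R, dot w (r.2 - r.1) < 0 →
    ∃ r' ∈ R, dot w (r'.1 - r.1) < 0 ∧ 0 < dot w (r'.2 - r'.1)

/-- The unit complex supported on species `j0`, among `2n+4` species. -/
def unitv (n j0 : ℕ) : Fin (2 * n + 4) → ℝ := fun j => if (j : ℕ) = j0 then 1 else 0

/-- The `n`-site processive phosphorylation/dephosphorylation network.
Species order: `ES₀,…,ES_{n−1}` at indices `0,…,n−1`; `FS₁,…,FS_n` at indices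
`n,…,2n−1`; `S₀` at `2n`; `S_n` at `2n+1`; `E` at `2n+2`; `F` at `2n+3`. -/
def procReactions (n : ℕ) : Set ((Fin (2 * n + 4) → ℝ) × (Fin (2 * n + 4) → ℝ)) :=
  {p |
    p = (unitv n (2 * n) + unitv n (2 * n + 2), unitv n 0) ∨        -- S₀+E → ES₀
    p = (unitv n 0, unitv n (2 * n) + unitv n (2 * n + 2)) ∨        -- ES₀ → S₀+E
    (∃ i, i + 1 < n ∧ p = (unitv n i, unitv n (i + 1))) ∨           -- ES_i → ES_{i+1}
    (∃ i, i + 1 < n ∧ p = (unitv n (i + 1), unitv n i)) ∨           -- ES_{i+1} → ES_i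
    p = (unitv n (n - 1), unitv n (2 * n + 1) + unitv n (2 * n + 2)) ∨ -- ES_{n−1} → S_n+E
    p = (unitv n (2 * n + 1) + unitv n (2 * n + 3), unitv n (2 * n - 1)) ∨ -- S_n+F → FS_n
    p = (unitv n (2 * n - 1), unitv n (2 * n + 1) + unitv n (2 * n + 3)) ∨ -- FS_n → S_n+F
    (∃ i, 1 ≤ i ∧ i + 1 ≤ n ∧ p = (unitv n (n + i), unitv n (n + i - 1))) ∨ -- FS_{i+1} → FS_i
    (∃ i, 1 ≤ i ∧ i + 1 ≤ n ∧ p = (unitv n (n + i - 1), unitv n (n + i))) ∨ -- FS_i → FS_{i+1}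
    p = (unitv n n, unitv n (2 * n) + unitv n (2 * n + 3))}         -- FS₁ → S₀+F

/-- The weight vector giving `1` to every `ES_i`, `FS_i`, `S_n`, `E` and `0` to `S₀`, `F`. -/
def wproc (n : ℕ) : Fin (2 * n + 4) → ℝ :=
  fun j => if (j : ℕ) = 2 * n ∨ (j : ℕ) = 2 * n + 3 then 0 else 1

/-! If `w` takes the same value on every source complex, no reaction `j` can have
`w·(y(j) − y(i)) < 0`, so a single reaction decreasing `w` already violates endotacticity.
For the processive network the weight `wproc` is such a `w`: every source is a single
`ES_i` or `FS_i` (weight `1`) or one of `S₀ + E`, `S_n + F` (weight `0 + 1`), while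
`FS₁ → S₀ + F` lowers it from `1` to `0`. -/

lemma dot_add {m : ℕ} (w a b : Fin m → ℝ) : dot w (a + b) = dot w a + dot w b :=
  dotProduct_add w a b

lemma not_endotacticSet_of_dot_fst_eq {m : ℕ} {R : Set ((Fin m → ℝ) × (Fin m → ℝ))}
    (w : Fin m → ℝ) (c : ℝ) (hsrc : ∀ r ∈ R, dot w r.1 = c)
    {r : (Fin m → ℝ) × (Fin m → ℝ)} (hr : r ∈ R) (hdec : dot w (r.2 - r.1) < 0) :
    ¬ EndotacticSet R := by
  intro hendo
  obtain ⟨r', hr', hlower, -⟩ := hendo w r hr hdec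
  rw [dot_sub, hsrc r' hr', hsrc r hr, sub_self] at hlower
  exact hlower.false

lemma unitv_eq_single {n j : ℕ} (hj : j < 2 * n + 4) : unitv n j = Pi.single ⟨j, hj⟩ 1 := by
  ext k
  simp [unitv, Pi.single_apply, Fin.ext_iff]

lemma dot_unitv {n j : ℕ} (w : Fin (2 * n + 4) → ℝ) (hj : j < 2 * n + 4) :
    dot w (unitv n j) = w ⟨j, hj⟩ := by
  rw [unitv_eq_single hj]
  exact dotProduct_single_one w _

section wproc

variable {n : ℕ}

lemma dot_wproc_unitv_S₀ : dot (wproc n) (unitv n (2 * n)) = 0 :=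
  (dot_unitv _ (by omega)).trans (if_pos (Or.inl rfl))

lemma dot_wproc_unitv_F : dot (wproc n) (unitv n (2 * n + 3)) = 0 :=
  (dot_unitv _ (by omega)).trans (if_pos (Or.inr rfl))

lemma dot_wproc_unitv_of_ne {j : ℕ} (hj : j < 2 * n + 4) (hS₀ : j ≠ 2 * n) (hF : j ≠ 2 * n + 3) :
    dot (wproc n) (unitv n j) = 1 :=
  (dot_unitv _ hj).trans (if_neg (not_or.2 ⟨hS₀, hF⟩))

lemma dot_wproc_fst_of_mem_procReactions (hn : 1 ≤ n) :
    ∀ r ∈ procReactions n, dot (wproc n) r.1 = 1 := by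
  rintro r (rfl | rfl | ⟨i, hi, rfl⟩ | ⟨i, hi, rfl⟩ | rfl | rfl | rfl | ⟨i, hi1, hi2, rfl⟩ |
      ⟨i, hi1, hi2, rfl⟩ | rfl) <;>
    simp (disch := omega) only [dot_add, dot_wproc_unitv_S₀, dot_wproc_unitv_F,
      dot_wproc_unitv_of_ne, zero_add, add_zero]

lemma dot_wproc_FS₁_to_S₀_add_F (hn : 1 ≤ n) :
    dot (wproc n) ((unitv n (2 * n) + unitv n (2 * n + 3)) - unitv n n) = -1 := by
  rw [dot_sub, dot_add, dot_wproc_unitv_S₀, dot_wproc_unitv_F,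
    dot_wproc_unitv_of_ne (by omega) (by omega) (by omega)]
  norm_num

end wproc

/-- For the `n`-site processive network, `w` gives every source complex value `1`,
while the reaction `FS₁ → F + S₀` satisfies `w·(y' − y) = −1 < 0`.
Consequently the network is not endotactic. -/
theorem processive_not_endotactic (n : ℕ) (hn : 1 ≤ n) :
    (∀ r ∈ procReactions n, dot (wproc n) r.1 = 1) ∧
    dot (wproc n) ((unitv n (2 * n) + unitv n (2 * n + 3)) - unitv n n) = -1 ∧
    ¬ EndotacticSet (procReactions n) := by
  have hsrc := dot_wproc_fst_of_mem_procReactions hn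
  have hFS₁ := dot_wproc_FS₁_to_S₀_add_F hn
  have hmem : (unitv n n, unitv n (2 * n) + unitv n (2 * n + 3)) ∈ procReactions n := by
    simp [procReactions]
  exact ⟨hsrc, hFS₁,
    not_endotacticSet_of_dot_fst_eq (wproc n) 1 hsrc hmem (hFS₁.trans_lt (by norm_num))⟩
end

section
/- Any single-species reaction network that is weakly reversible is endotactic. -/
/-- The one-step relation of a single-species network: `a` reacts to `b`. -/
def Reacts {ι : Type*} (y y' : ι → ℝ) (a b : ℝ) : Prop :=
  ∃ i : ι, y i = a ∧ y' i = b

/-- A single-species network is weakly reversible: every reaction lies on a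
directed cycle, i.e. there is a directed path from its target back to its source. -/
def WeaklyReversible1 {ι : Type*} (y y' : ι → ℝ) : Prop :=
  ∀ i : ι, Relation.ReflTransGen (Reacts y y') (y' i) (y i)

/-! The cycle through a reaction `y → y'` with `y < y'` returns from `y'` down to `y`, and its
first downward step starts at or above `y'`, hence strictly above `y`.
The case `y > y'` is the order dual. -/

namespace Relation.ReflTransGen

variable {α : Type*} [LinearOrder α] {r : α → α → Prop} {a b : α}

theorem exists_descent_from_above (h : ReflTransGen r a b) (hba : b < a) :
    ∃ u v, r u v ∧ v < u ∧ a ≤ u := by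
  induction h using head_induction_on with
  | refl => exact absurd hba (lt_irrefl _)
  | @head a m hstep _ ih =>
    rcases lt_or_ge m a with hma | ham
    · exact ⟨a, m, hstep, hma, le_rfl⟩
    · obtain ⟨u, v, huv, hvu, hmu⟩ := ih (hba.trans_le ham)
      exact ⟨u, v, huv, hvu, ham.trans hmu⟩

theorem exists_ascent_from_below (h : ReflTransGen r a b) (hab : a < b) :
    ∃ u v, r u v ∧ u < v ∧ u ≤ a :=
  exists_descent_from_above (α := αᵒᵈ) h hab

end Relation.ReflTransGen

theorem weaklyReversible_oneD_endotactic_general {ι : Type*}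
    (y y' : ι → ℝ) (hwr : WeaklyReversible1 y y') :
    (∀ i : ι, y i < y' i → ∃ j : ι, y' j < y j ∧ y i < y j) ∧
    (∀ i : ι, y' i < y i → ∃ j : ι, y j < y' j ∧ y j < y i) := by
  constructor
  · intro i hi
    obtain ⟨_, _, ⟨j, rfl, rfl⟩, hdown, hle⟩ := (hwr i).exists_descent_from_above hi
    exact ⟨j, hdown, hi.trans_le hle⟩
  · intro i hi
    obtain ⟨_, _, ⟨j, rfl, rfl⟩, hup, hle⟩ := (hwr i).exists_ascent_from_below hi
    exact ⟨j, hup, hle.trans_lt hi⟩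

/-- Any weakly reversible single-species network is endotactic
(conditions (+) and (−)). -/
theorem weaklyReversible_oneD_endotactic {ι : Type*} [Fintype ι]
    (y y' : ι → ℝ) (hwr : WeaklyReversible1 y y') :
    (∀ i : ι, y i < y' i → ∃ j : ι, y' j < y j ∧ y i < y j) ∧
    (∀ i : ι, y' i < y i → ∃ j : ι, y j < y' j ∧ y j < y i) :=
  weaklyReversible_oneD_endotactic_general y y' hwr
end
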